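/- arXiv:2408.12660 — 7 statements merged into one kernel-verified Lean document; each statement's English description precedes it below -/
import Mathlib

section
/- Let S be a finite set of positive integers, j = max(S), and let m be the largest positive integer such that every element of S is divisible by m. Then for every natural number k with m ∤ (k+1), the S-nacci number F^{(S)}_k equals 0. -/
theorem stmt_3 (S : Finset ℕ) (hS : S.Nonempty) (hpos : ∀ ℓ ∈ S, 0 < ℓ)
    (m : ℕ) (hm : ∀ ℓ ∈ S, m ∣ ℓ) (hmax : ∀ m' : ℕ, (∀ ℓ ∈ S, m' ∣ ℓ) → m' ≤ m)
    (F : ℕ → ℕ)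
    (hF0 : ∀ n < S.max' hS - 1, F n = 0)
    (hF1 : F (S.max' hS - 1) = 1)
    (hFrec : ∀ n ≥ S.max' hS, F n = ∑ ℓ ∈ S, F (n - ℓ)) :
    ∀ k : ℕ, ¬ m ∣ (k + 1) → F k = 0 := by
  have hjS : S.max' hS ∈ S := S.max'_mem hS
  have hmj : m ∣ S.max' hS := hm _ hjS
  intro k
  induction k using Nat.strong_induction_on with
  | _ k ih =>
    intro hk
    rcases lt_or_ge k (S.max' hS) with hlt | hge
    · rcases lt_or_ge k (S.max' hS - 1) with h | h
      · exact hF0 k h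
      · exfalso
        apply hk
        have hjpos : 0 < S.max' hS := hpos _ hjS
        have : k + 1 = S.max' hS := by omega
        rw [this]; exact hmj
    · rw [hFrec k hge]
      apply Finset.sum_eq_zero
      intro ℓ hℓ
      have hlj : ℓ ≤ S.max' hS := S.le_max' ℓ hℓ
      have hlp := hpos ℓ hℓ
      apply ih (k - ℓ) (by omega)
      intro hd
      apply hk
      have : k + 1 = (k - ℓ + 1) + ℓ := by omega
      rw [this]; exact Nat.dvd_add hd (hm ℓ hℓ)
end

section
/- Let S be a finite set of positive integers, and let m be the largest positive integer such that S ⊆ mℤ. Let S/m = {ℓ/m : ℓ ∈ S}. Then for all positive integers n, F^{(S)}_{nm−1} = F^{(S/m)}_{n−1}. -/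
theorem stmt_4 (S : Finset ℕ) (hS : S.Nonempty) (hpos : ∀ ℓ ∈ S, 0 < ℓ)
    (m : ℕ) (hmpos : 0 < m) (hm : ∀ ℓ ∈ S, m ∣ ℓ)
    (hmax : ∀ m' : ℕ, (∀ ℓ ∈ S, m' ∣ ℓ) → m' ≤ m)
    (F F' : ℕ → ℕ)
    (hF0 : ∀ n < S.max' hS - 1, F n = 0)
    (hF1 : F (S.max' hS - 1) = 1)
    (hFrec : ∀ n ≥ S.max' hS, F n = ∑ ℓ ∈ S, F (n - ℓ))
    (hS' : (S.image (· / m)).Nonempty)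
    (hF'0 : ∀ n < (S.image (· / m)).max' hS' - 1, F' n = 0)
    (hF'1 : F' ((S.image (· / m)).max' hS' - 1) = 1)
    (hF'rec : ∀ n ≥ (S.image (· / m)).max' hS',
      F' n = ∑ ℓ ∈ S.image (· / m), F' (n - ℓ)) :
    ∀ n : ℕ, 0 < n → F (n * m - 1) = F' (n - 1) := by
  have hj : S.max' hS ∈ S := S.max'_mem hS
  obtain ⟨j', hj'⟩ := hm _ hj
  have hjpos : 0 < S.max' hS := hpos _ hj
  have hj'pos : 0 < j' := by
    by_contra h
    push_neg at h
    have h0 : j' = 0 := Nat.le_zero.mp h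
    rw [h0, Nat.mul_zero] at hj'
    omega
  have hmax' : (S.image (· / m)).max' hS' = j' := by
    apply le_antisymm
    · apply Finset.max'_le
      intro y hy
      simp only [Finset.mem_image] at hy
      obtain ⟨ℓ, hℓ, rfl⟩ := hy
      have hle : ℓ ≤ S.max' hS := Finset.le_max' S ℓ hℓ
      calc ℓ / m ≤ S.max' hS / m := Nat.div_le_div_right hle
        _ = j' := by rw [hj', Nat.mul_div_cancel_left _ hmpos]
    · apply Finset.le_max'
      simp only [Finset.mem_image]
      exact ⟨S.max' hS, hj, by rw [hj', Nat.mul_div_cancel_left _ hmpos]⟩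
  rw [hmax'] at hF'0 hF'1 hF'rec
  have hc : j' * m = m * j' := Nat.mul_comm j' m
  intro n
  induction n using Nat.strong_induction_on with
  | _ n ih =>
    intro hn
    rcases lt_trichotomy (n * m) (S.max' hS) with hlt | heq | hgt
    · have hnlt : n < j' := by
        by_contra h
        push_neg at h
        have : j' * m ≤ n * m := Nat.mul_le_mul_right m h
        omega
      have hnm : 0 < n * m := Nat.mul_pos hn hmpos
      have key1 : n * m - 1 < S.max' hS - 1 := by omega
      have key2 : n - 1 < j' - 1 := by omega
      rw [hF0 _ key1, hF'0 _ key2]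
    · have hne : n = j' := by
        have h1 : n * m = j' * m := by omega
        exact Nat.eq_of_mul_eq_mul_right hmpos h1
      have h2 : n * m - 1 = S.max' hS - 1 := by omega
      have h3 : n - 1 = j' - 1 := by omega
      rw [h2, h3, hF1, hF'1]
    · have hnj' : j' < n := by
        by_contra h
        push_neg at h
        have : n * m ≤ j' * m := Nat.mul_le_mul_right m h
        omega
      rw [hFrec _ (by omega)]
      rw [hF'rec _ (by omega : n - 1 ≥ j')]
      rw [Finset.sum_image (fun x hx y hy hxy => by
        have hx' := hm x hx
        have hy' := hm y hy
        rw [← Nat.div_mul_cancel hx', ← Nat.div_mul_cancel hy', hxy])]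
      apply Finset.sum_congr rfl
      intro ℓ hℓ
      obtain ⟨k, hk⟩ := hm ℓ hℓ
      have hkpos : 0 < k := by
        rcases Nat.eq_zero_or_pos k with h | h
        · rw [h, Nat.mul_zero] at hk
          have := hpos ℓ hℓ
          omega
        · exact h
      have hkle : k ≤ j' := by
        have hle : ℓ ≤ S.max' hS := Finset.le_max' S ℓ hℓ
        by_contra h
        push_neg at h
        have : m * j' < m * k := (Nat.mul_lt_mul_left hmpos).mpr h
        omega
      have hdiv : ℓ / m = k := by rw [hk, Nat.mul_div_cancel_left _ hmpos]
      have hsub : (n - k) * m = n * m - k * m := Nat.sub_mul n k m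
      have hkm : k * m = m * k := Nat.mul_comm k m
      have hjm : j' * m = m * j' := Nat.mul_comm j' m
      have h1 : n * m - 1 - ℓ = (n - k) * m - 1 := by omega
      have h2 : n - 1 - ℓ / m = (n - k) - 1 := by omega
      rw [h1, h2]
      exact ih (n - k) (by omega) (by omega)
end

section
/- Let S be a finite set of positive integers with j = max(S), and let ‖·‖ be a submultiplicative matrix norm on d×d complex matrices. Let {A_n} satisfy A_n = ∏_{k ∈ S} A_{n−k} for n ≥ j (product in any fixed order). Then for all n ≥ j, ‖A_n‖ ≤ ∏_{k=0}^{j−1} ‖A_k‖^{m_{k,n}}, where m_{k,n} = ∑_{ℓ ∈ S, ℓ ≥ j−k} F^{(S)}_{n+j−1−k−ℓ}. -/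
/-!
Iterating the submultiplicative estimate `‖A_n‖ ≤ ∏_{ℓ ∈ S} ‖A_{n-ℓ}‖` down to the initial
block `A_0, …, A_{j-1}` bounds `‖A_n‖` by `∏_k ‖A_k‖ ^ e_{k,n}`, where for each `k` the exponents
`e_{k,·}` solve the `S`-nacci recurrence with initial values `δ_{k,·}`. For `n ≥ j` this fundamental
solution is `m_{k,n}`: the `S`-nacci sequence `F` is the impulse response of the recurrence, i.e.
`F_m = ∑_{ℓ ∈ S} F_{m-ℓ} + [m = j-1]`, and summing this over `ℓ ≥ j - k` shows that `m_{k,·}`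
satisfies the same recurrence, the impulse accounting for the initial value `δ_{k,n-ℓ}`.
-/

open Finset NNReal

theorem List.le_finset_prod_of_submultiplicative {α β ι : Type*} [Monoid α] [CommMonoid β]
    [Preorder β] [IsOrderedMonoid β] (f : α → β) (h_mul : ∀ a b, f (a * b) ≤ f a * f b)
    {s : Finset ι} (hs : s.Nonempty) (g : ι → α) {l : List α}
    (hl : (l : Multiset α) = s.val.map g) : f l.prod ≤ ∏ i ∈ s, f (g i) := by
  have hl_ne : l ≠ [] := by
    rintro rfl
    simp [eq_comm, hs.ne_empty] at hl
  calc f l.prod ≤ (l.map f).prod := le_prod_nonempty_of_submultiplicative f h_mul l hl_ne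
    _ = ((l : Multiset α).map f).prod := by rw [Multiset.map_coe, Multiset.prod_coe]
    _ = ∏ i ∈ s, f (g i) := by rw [hl, Multiset.map_map]; rfl

theorem le_prod_pow_of_le_prod_sub {M : Type*} [CommMonoid M] [PartialOrder M]
    [IsOrderedMonoid M] {S : Finset ℕ} {j : ℕ} (hj : 0 < j) (hpos : ∀ ℓ ∈ S, 0 < ℓ) {a : ℕ → M}
    (ha : ∀ n ≥ j, a n ≤ ∏ ℓ ∈ S, a (n - ℓ)) {e : ℕ → ℕ → ℕ}
    (he_init : ∀ k, ∀ n < j, e k n = if k = n then 1 else 0)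
    (he_rec : ∀ k < j, ∀ n ≥ j, e k n = ∑ ℓ ∈ S, e k (n - ℓ)) (n : ℕ) :
    a n ≤ ∏ k ∈ range j, a k ^ e k n := by
  induction n using Nat.strong_induction_on with | _ n ih => ?_
  rcases lt_or_ge n j with hn | hn
  · simp [he_init _ n hn, hn]
  calc a n ≤ ∏ ℓ ∈ S, a (n - ℓ) := ha n hn
    _ ≤ ∏ ℓ ∈ S, ∏ k ∈ range j, a k ^ e k (n - ℓ) :=
        prod_le_prod' fun ℓ hℓ => ih _ (Nat.sub_lt (by omega) (hpos ℓ hℓ))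
    _ = ∏ k ∈ range j, a k ^ ∑ ℓ ∈ S, e k (n - ℓ) := by
        rw [prod_comm]
        exact prod_congr rfl fun k _ => prod_pow_eq_pow_sum _ _ _
    _ = ∏ k ∈ range j, a k ^ e k n :=
        prod_congr rfl fun k hk => by rw [he_rec k (mem_range.1 hk) n hn]

/-- `δ_{k,n}` for `n < j` and the paper's `m_{k,n}` for `n ≥ j`. -/
def snacciExponent (S : Finset ℕ) (j : ℕ) (F : ℕ → ℕ) (k n : ℕ) : ℕ :=
  if n < j then (if k = n then 1 else 0) else ∑ ℓ ∈ S with j - k ≤ ℓ, F (n + j - 1 - k - ℓ)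

section Snacci

variable {S : Finset ℕ} {j : ℕ} {F : ℕ → ℕ}

/-- Restricting the sum to `ℓ ≤ t` drops only vanishing summands, and unlike the full sum it is not
spoiled by truncated subtraction at `m = j - 1` (e.g. `S = {1}`, where `F (0 - 1) = F 0 = 1`). -/
theorem snacci_eq_sum_add_ite (hpos : ∀ ℓ ∈ S, 0 < ℓ) (hle : ∀ ℓ ∈ S, ℓ ≤ j)
    (hF0 : ∀ n < j - 1, F n = 0) (hF1 : F (j - 1) = 1) (hFrec : ∀ n ≥ j, F n = ∑ ℓ ∈ S, F (n - ℓ))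
    {t m : ℕ} (htm : t ≤ m) (hmt : m ≤ t + j - 1) :
    F m = ∑ ℓ ∈ S with ℓ ≤ t, F (m - ℓ) + if m = j - 1 then 1 else 0 := by
  rcases lt_trichotomy m (j - 1) with hm | hm | hm
  · rw [hF0 m hm, if_neg hm.ne, add_zero, eq_comm]
    exact sum_eq_zero fun ℓ _ => hF0 _ (by omega)
  · rw [hm, hF1, if_pos rfl, right_eq_add]
    refine sum_eq_zero fun ℓ hℓ => hF0 _ ?_
    rw [mem_filter] at hℓ
    have := hpos ℓ hℓ.1
    omega
  · have hsmall : ∀ ℓ ∈ {ℓ ∈ S | ¬ℓ ≤ t}, F (m - ℓ) = 0 := by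
      intro ℓ hℓ
      rw [mem_filter] at hℓ
      have := hle ℓ hℓ.1
      exact hF0 _ (by omega)
    rw [hFrec m (by omega), if_neg hm.ne', add_zero, ← sum_filter_add_sum_filter_not S (· ≤ t),
      sum_eq_zero hsmall, add_zero]

theorem snacciExponent_of_lt (k : ℕ) {n : ℕ} (hn : n < j) :
    snacciExponent S j F k n = if k = n then 1 else 0 := by
  rw [snacciExponent, if_pos hn]

theorem snacciExponent_of_ge (k : ℕ) {n : ℕ} (hn : j ≤ n) :
    snacciExponent S j F k n = ∑ ℓ ∈ S with j - k ≤ ℓ, F (n + j - 1 - k - ℓ) := by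
  rw [snacciExponent, if_neg (not_lt.2 hn)]

theorem snacciExponent_eq_sum (hpos : ∀ ℓ ∈ S, 0 < ℓ) (hle : ∀ ℓ ∈ S, ℓ ≤ j)
    (hF0 : ∀ n < j - 1, F n = 0) (hF1 : F (j - 1) = 1) (hFrec : ∀ n ≥ j, F n = ∑ ℓ ∈ S, F (n - ℓ))
    {k n : ℕ} (hk : k < j) (hn : j ≤ n) :
    snacciExponent S j F k n = ∑ ℓ ∈ S, snacciExponent S j F k (n - ℓ) := by
  have hlhs : ∀ ℓ' ∈ {ℓ ∈ S | j - k ≤ ℓ}, F (n + j - 1 - k - ℓ') =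
      ∑ ℓ ∈ S with ℓ ≤ n - j, F (n + j - 1 - k - ℓ' - ℓ) + if ℓ' = n - k then 1 else 0 := by
    intro ℓ' hℓ'
    rw [mem_filter] at hℓ'
    have := hle ℓ' hℓ'.1
    rw [snacci_eq_sum_add_ite hpos hle hF0 hF1 hFrec (t := n - j) (by omega) (by omega)]
    exact congrArg _ (if_congr (by omega) rfl rfl)
  have hrhs_large : ∀ ℓ ∈ {ℓ ∈ S | ℓ ≤ n - j}, snacciExponent S j F k (n - ℓ) =
      ∑ ℓ' ∈ S with j - k ≤ ℓ', F (n + j - 1 - k - ℓ' - ℓ) := by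
    intro ℓ hℓ
    rw [mem_filter] at hℓ
    rw [snacciExponent_of_ge k (by omega)]
    exact sum_congr rfl fun ℓ' _ => congrArg F (by omega)
  have hrhs_small : ∀ ℓ ∈ {ℓ ∈ S | ¬ℓ ≤ n - j}, snacciExponent S j F k (n - ℓ) =
      if ℓ = n - k then 1 else 0 := by
    intro ℓ hℓ
    rw [mem_filter] at hℓ
    have := hle ℓ hℓ.1
    rw [snacciExponent_of_lt k (by omega)]
    exact if_congr (by omega) rfl rfl
  rw [snacciExponent_of_ge k hn, sum_congr rfl hlhs, sum_add_distrib,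
    ← sum_filter_add_sum_filter_not S (· ≤ n - j), sum_congr rfl hrhs_large,
    sum_congr rfl hrhs_small, sum_comm, sum_ite_eq', sum_ite_eq']
  congr 1
  exact if_congr (by simp only [mem_filter]; exact and_congr_right fun _ => by omega) rfl rfl

end Snacci

theorem stmt_8_general (d : ℕ) (S : Finset ℕ) (hS : S.Nonempty) (hpos : ∀ ℓ ∈ S, 0 < ℓ)
    (ν : Matrix (Fin d) (Fin d) ℂ → ℝ)
    (hν0 : ∀ X, 0 ≤ ν X)
    (hνmul : ∀ X Y, ν (X * Y) ≤ ν X * ν Y)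
    (A : ℕ → Matrix (Fin d) (Fin d) ℂ)
    (hA : ∀ n ≥ S.max' hS, ∃ l : List (Matrix (Fin d) (Fin d) ℂ),
      (l : Multiset (Matrix (Fin d) (Fin d) ℂ)) = S.val.map (fun k => A (n - k)) ∧
      A n = l.prod)
    (F : ℕ → ℕ)
    (hF0 : ∀ n < S.max' hS - 1, F n = 0)
    (hF1 : F (S.max' hS - 1) = 1)
    (hFrec : ∀ n ≥ S.max' hS, F n = ∑ ℓ ∈ S, F (n - ℓ)) :
    ∀ n ≥ S.max' hS,
      ν (A n) ≤ ∏ k ∈ Finset.range (S.max' hS),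
        ν (A k) ^ (∑ ℓ ∈ S.filter (fun ℓ => S.max' hS - k ≤ ℓ),
          F (n + S.max' hS - 1 - k - ℓ)) := by
  intro n hn
  have hle : ∀ ℓ ∈ S, ℓ ≤ S.max' hS := S.le_max'
  let μ : Matrix (Fin d) (Fin d) ℂ → ℝ≥0 := fun X => ⟨ν X, hν0 X⟩
  have hμA : ∀ m ≥ S.max' hS, μ (A m) ≤ ∏ ℓ ∈ S, μ (A (m - ℓ)) := by
    intro m hm
    obtain ⟨l, hl, hAm⟩ := hA m hm
    rw [hAm]
    exact List.le_finset_prod_of_submultiplicative μ (fun X Y => hνmul X Y) hS _ hl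
  have hbound := le_prod_pow_of_le_prod_sub (hpos _ (S.max'_mem hS)) hpos hμA
    (fun k _ hn => snacciExponent_of_lt k hn)
    (fun k hk _ hn => snacciExponent_eq_sum hpos hle hF0 hF1 hFrec hk hn) n
  simp only [snacciExponent_of_ge _ hn] at hbound
  have hbound_real := NNReal.coe_le_coe.2 hbound
  push_cast at hbound_real
  exact hbound_real

theorem stmt_8 (d : ℕ) (S : Finset ℕ) (hS : S.Nonempty) (hpos : ∀ ℓ ∈ S, 0 < ℓ)
    (ν : Matrix (Fin d) (Fin d) ℂ → ℝ)
    (hν0 : ∀ X, 0 ≤ ν X)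
    (hνadd : ∀ X Y, ν (X + Y) ≤ ν X + ν Y)
    (hνsmul : ∀ (c : ℂ) (X), ν (c • X) = ‖c‖ * ν X)
    (hνeq : ∀ X, ν X = 0 ↔ X = 0)
    (hνmul : ∀ X Y, ν (X * Y) ≤ ν X * ν Y)
    (A : ℕ → Matrix (Fin d) (Fin d) ℂ)
    (hA : ∀ n ≥ S.max' hS, ∃ l : List (Matrix (Fin d) (Fin d) ℂ),
      (l : Multiset (Matrix (Fin d) (Fin d) ℂ)) = S.val.map (fun k => A (n - k)) ∧
      A n = l.prod)
    (F : ℕ → ℕ)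
    (hF0 : ∀ n < S.max' hS - 1, F n = 0)
    (hF1 : F (S.max' hS - 1) = 1)
    (hFrec : ∀ n ≥ S.max' hS, F n = ∑ ℓ ∈ S, F (n - ℓ)) :
    ∀ n ≥ S.max' hS,
      ν (A n) ≤ ∏ k ∈ Finset.range (S.max' hS),
        ν (A k) ^ (∑ ℓ ∈ S.filter (fun ℓ => S.max' hS - k ≤ ℓ),
          F (n + S.max' hS - 1 - k - ℓ)) :=
  stmt_8_general d S hS hpos ν hν0 hνmul A hA F hF0 hF1 hFrec
end

section
/- Let φ = (1+√5)/2 be the golden ratio, and let A_0, A_1, B be d×d complex matrices with A_n = B A_{n−1} A_{n−2} for n ≥ 2. If ‖B‖^φ · ‖A_0‖^{1/φ} · ‖A_1‖ < 1 for some submultiplicative matrix norm ‖·‖, then A_n converges to the zero matrix. -/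
/-!
Taking norms, `a n = ‖A n‖` satisfies `a (n + 2) ≤ ‖B‖ * a (n + 1) * a n`, so `c n = ‖B‖ * a n`
satisfies `c (n + 2) ≤ c (n + 1) * c n`, and inductively `c (n + 1) ≤ c 1 ^ F (n + 1) * c 0 ^ F n`
with `F` the Fibonacci numbers. Since `F (n + 1) = φ F n + ψ ^ n` with `|ψ| < 1`, the logarithm of
this bound is `F n * φ * log (c 1 * c 0 ^ φ⁻¹) + O(1) → -∞`, because
`c 1 * c 0 ^ φ⁻¹ = ‖B‖ ^ φ * ‖A 0‖ ^ φ⁻¹ * ‖A 1‖ < 1` (using `1 + φ⁻¹ = φ`). Finally, all norms on a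
finite-dimensional space are equivalent, so `‖A n‖ → 0` forces `A n → 0`.
-/

open Filter Topology

theorem le_pow_fib_mul_pow_fib {R : Type*} [CommSemiring R] [PartialOrder R] [IsOrderedRing R]
    {c : ℕ → R} (hc0 : ∀ n, 0 ≤ c n)
    (hc : ∀ n, c (n + 2) ≤ c (n + 1) * c n) (n : ℕ) :
    c (n + 1) ≤ c 1 ^ Nat.fib (n + 1) * c 0 ^ Nat.fib n := by
  suffices ∀ n, c (n + 1) ≤ c 1 ^ Nat.fib (n + 1) * c 0 ^ Nat.fib n ∧
      c (n + 2) ≤ c 1 ^ Nat.fib (n + 2) * c 0 ^ Nat.fib (n + 1) from (this n).1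
  intro n
  induction n with
  | zero => simpa using hc 0
  | succ n ih =>
    refine ⟨ih.2, ?_⟩
    calc c (n + 3) ≤ c (n + 2) * c (n + 1) := hc (n + 1)
      _ ≤ (c 1 ^ Nat.fib (n + 2) * c 0 ^ Nat.fib (n + 1)) *
          (c 1 ^ Nat.fib (n + 1) * c 0 ^ Nat.fib n) :=
        mul_le_mul ih.2 ih.1 (hc0 _) (mul_nonneg (pow_nonneg (hc0 1) _) (pow_nonneg (hc0 0) _))
      _ = c 1 ^ Nat.fib (n + 3) * c 0 ^ Nat.fib (n + 2) := by
        rw [Nat.fib_add_two (n := n + 1), Nat.fib_add_two (n := n)]; ring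

theorem Nat.tendsto_fib_atTop : Tendsto Nat.fib atTop atTop :=
  tendsto_atTop_mono' atTop (eventually_atTop.2 ⟨5, fun _ => Nat.le_fib_self⟩) tendsto_id

section GoldenRecursion

open Real
open scoped goldenRatio

theorem tendsto_pow_fib_succ_mul_pow_fib {u v : ℝ} (hu : 0 ≤ u) (hv : 0 ≤ v)
    (huv : v * u ^ φ⁻¹ < 1) :
    Tendsto (fun n => v ^ Nat.fib (n + 1) * u ^ Nat.fib n) atTop (𝓝 0) := by
  rcases hv.eq_or_lt with rfl | hv
  · simp [(Nat.fib_pos.2 (Nat.succ_pos _)).ne']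
  rcases hu.eq_or_lt with rfl | hu
  · refine tendsto_const_nhds.congr' (eventually_atTop.2 ⟨1, fun n hn => ?_⟩)
    simp [(Nat.fib_pos.2 hn).ne']
  have hexp : ∀ n, v ^ Nat.fib (n + 1) * u ^ Nat.fib n =
      exp (Nat.fib n * (φ * log (v * u ^ φ⁻¹)) + ψ ^ n * log v) := by
    intro n
    have hfib := Real.fib_succ_sub_goldenRatio_mul_fib n
    rw [log_mul hv.ne' (rpow_pos_of_pos hu _).ne', log_rpow hu,
      show (Nat.fib n : ℝ) * (φ * (log v + φ⁻¹ * log u)) + ψ ^ n * log v =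
        Nat.fib (n + 1) * log v + Nat.fib n * log u by
          rw [← hfib]; field_simp; ring,
      exp_add, exp_nat_mul, exp_nat_mul, exp_log hv, exp_log hu]
  simp_rw [hexp]
  refine tendsto_exp_comp_nhds_zero.2 (Tendsto.atBot_add (C := 0) ?_ ?_)
  · exact (tendsto_natCast_atTop_atTop.comp Nat.tendsto_fib_atTop).atTop_mul_const_of_neg
      (mul_neg_of_pos_of_neg goldenRatio_pos (log_neg (by positivity) huv))
  · simpa using (tendsto_pow_atTop_nhds_zero_of_abs_lt_one
      (abs_lt.2 ⟨neg_one_lt_goldenConj, goldenConj_neg.trans one_pos⟩)).mul_const (log v)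

theorem tendsto_zero_of_le_mul_mul {c : ℕ → ℝ} (hc0 : ∀ n, 0 ≤ c n)
    (hc : ∀ n, c (n + 2) ≤ c (n + 1) * c n) (h : c 1 * c 0 ^ φ⁻¹ < 1) :
    Tendsto c atTop (𝓝 0) :=
  (tendsto_add_atTop_iff_nat 1).1 <| squeeze_zero (fun _ => hc0 _) (le_pow_fib_mul_pow_fib hc0 hc)
    (tendsto_pow_fib_succ_mul_pow_fib (hc0 0) (hc0 1) h)

theorem tendsto_zero_of_le_const_mul_mul {a : ℕ → ℝ} {b : ℝ} (hb : 0 ≤ b) (ha0 : ∀ n, 0 ≤ a n)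
    (ha : ∀ n, a (n + 2) ≤ b * a (n + 1) * a n) (h : b ^ φ * a 0 ^ φ⁻¹ * a 1 < 1) :
    Tendsto a atTop (𝓝 0) := by
  rcases hb.eq_or_lt with rfl | hb
  · refine tendsto_const_nhds.congr' (eventually_atTop.2 ⟨2, fun n hn => ?_⟩)
    obtain ⟨k, rfl⟩ := Nat.exists_eq_add_of_le' hn
    exact le_antisymm (by simpa using ha k) (ha0 _) |>.symm
  have hba : Tendsto (fun n => b * a n) atTop (𝓝 0) := by
    refine tendsto_zero_of_le_mul_mul (fun n => mul_nonneg hb.le (ha0 n)) (fun n => ?_) ?_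
    · calc b * a (n + 2) ≤ b * (b * a (n + 1) * a n) := mul_le_mul_of_nonneg_left (ha n) hb.le
        _ = b * a (n + 1) * (b * a n) := by ring
    · have hφ : 1 + φ⁻¹ = φ := by rw [inv_goldenRatio, one_sub_goldenRatio.symm]; ring
      calc b * a 1 * (b * a 0) ^ φ⁻¹ = b ^ (1 + φ⁻¹) * a 0 ^ φ⁻¹ * a 1 := by
            rw [mul_rpow hb.le (ha0 0), rpow_add hb, rpow_one]; ring
        _ < 1 := by rwa [hφ]
  simpa [hb.ne'] using hba.const_mul b⁻¹

end GoldenRecursion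

/-- `E` normed by `ν`, forgetting any topology `E` already carries. -/
def WithAddGroupNorm {E : Type*} [AddGroup E] (_ν : AddGroupNorm E) : Type _ := E

namespace WithAddGroupNorm

variable {𝕜 E : Type*} [AddCommGroup E] (ν : AddGroupNorm E)

instance : NormedAddCommGroup (WithAddGroupNorm ν) := ν.toNormedAddCommGroup

instance [Semiring 𝕜] [Module 𝕜 E] : Module 𝕜 (WithAddGroupNorm ν) := ‹Module 𝕜 E›

instance [DivisionRing 𝕜] [Module 𝕜 E] [FiniteDimensional 𝕜 E] :
    FiniteDimensional 𝕜 (WithAddGroupNorm ν) := ‹FiniteDimensional 𝕜 E›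

end WithAddGroupNorm

theorem AddGroupNorm.tendsto_zero_of_tendsto_zero {𝕜 E ι : Type*} [NontriviallyNormedField 𝕜]
    [CompleteSpace 𝕜] [AddCommGroup E] [Module 𝕜 E] [FiniteDimensional 𝕜 E] [TopologicalSpace E]
    [IsTopologicalAddGroup E] [ContinuousSMul 𝕜 E] [T2Space E]
    (ν : AddGroupNorm E) (hν : ∀ (c : 𝕜) x, ν (c • x) = ‖c‖ * ν x) {l : Filter ι} {x : ι → E}
    (h : Tendsto (fun i => ν (x i)) l (𝓝 0)) : Tendsto x l (𝓝 0) := by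
  let _ : NormedSpace 𝕜 (WithAddGroupNorm ν) := ⟨fun c y => (hν c y).le⟩
  let toE : WithAddGroupNorm ν →ₗ[𝕜] E := LinearMap.id
  let y : ι → WithAddGroupNorm ν := x
  have hy : Tendsto y l (𝓝 0) := tendsto_zero_iff_norm_tendsto_zero.2 h
  exact (toE.continuous_of_finiteDimensional.tendsto 0).comp hy

theorem stmt_10 (d : ℕ)
    (φ : ℝ) (hφ : φ = (1 + Real.sqrt 5) / 2)
    (ν : Matrix (Fin d) (Fin d) ℂ → ℝ)
    (hν0 : ∀ X, 0 ≤ ν X)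
    (hνadd : ∀ X Y, ν (X + Y) ≤ ν X + ν Y)
    (hνsmul : ∀ (c : ℂ) (X), ν (c • X) = ‖c‖ * ν X)
    (hνeq : ∀ X, ν X = 0 ↔ X = 0)
    (hνmul : ∀ X Y, ν (X * Y) ≤ ν X * ν Y)
    (B : Matrix (Fin d) (Fin d) ℂ)
    (A : ℕ → Matrix (Fin d) (Fin d) ℂ)
    (hA : ∀ n ≥ 2, A n = B * A (n - 1) * A (n - 2))
    (hcond : ν B ^ φ * ν (A 0) ^ (1 / φ) * ν (A 1) < 1) :
    Filter.Tendsto A Filter.atTop (nhds 0) := by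
  subst hφ
  have hrec : ∀ n, ν (A (n + 2)) ≤ ν B * ν (A (n + 1)) * ν (A n) := fun n => by
    rw [hA (n + 2) (by omega), show n + 2 - 1 = n + 1 by omega, Nat.add_sub_cancel]
    exact (hνmul _ _).trans (mul_le_mul_of_nonneg_right (hνmul _ _) (hν0 _))
  let νNorm : AddGroupNorm (Matrix (Fin d) (Fin d) ℂ) :=
    { toFun := ν
      map_zero' := (hνeq 0).2 rfl
      add_le' := hνadd
      neg' := fun X => by simpa using hνsmul (-1) X
      eq_zero_of_map_eq_zero' := fun X => (hνeq X).1 }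
  exact νNorm.tendsto_zero_of_tendsto_zero hνsmul <|
    tendsto_zero_of_le_const_mul_mul (hν0 B) (fun n => hν0 _) hrec (by rwa [one_div] at hcond)
end

section
/- All complex roots of the polynomial x^j − x^{j−1} − x^{j−2} − ... − x − 1 other than the unique positive real root φ_j have modulus strictly less than 1 (in particular strictly less than φ_j), for every integer j ≥ 2. -/
/-!
Multiplying `z ^ j = ∑ k < j, z ^ k` by `z - 1` gives `z ^ (j + 1) + 1 = 2 * z ^ j`. For a root
with `r = ‖z‖ ≥ 1`, the triangle inequality applied to both identities forces
`r ^ j ≤ ∑ k < j, r ^ k` and `(r - 1) * (r ^ j - ∑ k < j, r ^ k) ≥ 0`, so either `r = 1` or `r` is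
a positive root, i.e. `r = φ`. In both cases `r ^ (j + 1) + 1 = 2 * r ^ j`, so the triangle
inequality for `z ^ (j + 1) + 1` is an equality: `z ^ (j + 1)` is a positive real, and then
`z = r`. But `1` is not a root and `z ≠ φ`.
-/

open Finset

theorem sub_one_mul_pow_sub_geom_sum {R : Type*} [CommRing R] (x : R) (j : ℕ) :
    (x - 1) * (x ^ j - ∑ k ∈ range j, x ^ k) = x ^ (j + 1) + 1 - 2 * x ^ j := by
  linear_combination -geom_sum_mul x j

theorem pow_succ_add_one_eq_of_pow_eq_geom_sum {R : Type*} [CommRing R] {x : R} {j : ℕ}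
    (hx : x ^ j = ∑ k ∈ range j, x ^ k) : x ^ (j + 1) + 1 = 2 * x ^ j := by
  linear_combination (x - 1) * hx - sub_one_mul_pow_sub_geom_sum x j

/-- Compare `r ^ j = ∑ (r / φ) ^ j * φ ^ k` with `r ^ k = (r / φ) ^ k * φ ^ k` termwise. -/
theorem pow_lt_geom_sum_of_lt_root {j : ℕ} (hj : j ≠ 0) {φ r : ℝ} (hφ0 : 0 < φ)
    (hφ : φ ^ j = ∑ k ∈ range j, φ ^ k) (hr : 0 < r) (hrφ : r < φ) :
    r ^ j < ∑ k ∈ range j, r ^ k :=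
  calc r ^ j = (r / φ) ^ j * φ ^ j := by rw [div_pow, div_mul_cancel₀ _ (by positivity)]
    _ = ∑ k ∈ range j, (r / φ) ^ j * φ ^ k := by rw [hφ, mul_sum]
    _ < ∑ k ∈ range j, (r / φ) ^ k * φ ^ k := by
      refine sum_lt_sum_of_nonempty (nonempty_range_iff.2 hj) fun k hk => ?_
      have hrφ' : r / φ < 1 := (div_lt_one hφ0).2 hrφ
      exact mul_lt_mul_of_pos_right
        (pow_lt_pow_right_of_lt_one₀ (by positivity) hrφ' (mem_range.1 hk)) (by positivity)
    _ = ∑ k ∈ range j, r ^ k := by simp_rw [← mul_pow, div_mul_cancel₀ _ hφ0.ne']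

theorem eq_of_pow_eq_geom_sum {j : ℕ} (hj : j ≠ 0) {r φ : ℝ} (hr0 : 0 < r) (hφ0 : 0 < φ)
    (hr : r ^ j = ∑ k ∈ range j, r ^ k) (hφ : φ ^ j = ∑ k ∈ range j, φ ^ k) : r = φ := by
  rcases lt_trichotomy r φ with hlt | heq | hgt
  · exact absurd hr (pow_lt_geom_sum_of_lt_root hj hφ0 hφ hr0 hlt).ne
  · exact heq
  · exact absurd hφ (pow_lt_geom_sum_of_lt_root hj hr0 hr hφ0 hgt).ne

theorem Complex.eq_norm_of_norm_add_one {w : ℂ} (h : ‖w + 1‖ = ‖w‖ + 1) : w = ‖w‖ := by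
  have := (sameRay_iff_norm_add (x := w) (y := 1)).2 (by rw [norm_one]; exact h)
  simpa using this.norm_smul_eq.symm

theorem Complex.eq_norm_of_pow_succ_add_one_eq {z : ℂ} {j : ℕ}
    (hz : z ^ (j + 1) + 1 = 2 * z ^ j) (hr : ‖z‖ ^ (j + 1) + 1 = 2 * ‖z‖ ^ j) :
    z = ‖z‖ := by
  have hr0 : (‖z‖ : ℂ) ^ j ≠ 0 := by
    rintro h
    have : ‖z‖ ^ j = 0 := by exact_mod_cast h
    rw [pow_succ, this, zero_mul] at hr
    norm_num at hr
  have hpow : z ^ (j + 1) = (‖z‖ : ℂ) ^ (j + 1) := by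
    have := eq_norm_of_norm_add_one (w := z ^ (j + 1)) (by rw [hz, norm_mul, norm_pow]; simp [hr])
    rw [this, norm_pow, ofReal_pow]
  have hpow' : z ^ j = (‖z‖ : ℂ) ^ j := by
    have hr' : (‖z‖ : ℂ) ^ (j + 1) + 1 = 2 * (‖z‖ : ℂ) ^ j := by exact_mod_cast hr
    linear_combination (hpow + hr' - hz) / 2
  refine mul_right_cancel₀ hr0 ?_
  rw [← pow_succ', ← hpow', ← pow_succ', hpow]

theorem stmt_15 (j : ℕ) (hj : 2 ≤ j) (φ : ℝ) (hφpos : 0 < φ)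
    (hφ : φ ^ j = ∑ k ∈ Finset.range j, φ ^ k) :
    ∀ z : ℂ, z ^ j = ∑ k ∈ Finset.range j, z ^ k → z ≠ (φ : ℂ) →
      ‖z‖ < 1 := by
  intro z hz hzφ
  by_contra! hr1
  have hq := pow_succ_add_one_eq_of_pow_eq_geom_sum hz
  have hr_le : ‖z‖ ^ j ≤ ∑ k ∈ range j, ‖z‖ ^ k := by
    rw [← norm_pow, hz]
    simpa [norm_pow] using norm_sum_le (range j) (z ^ ·)
  have htri : 2 * ‖z‖ ^ j ≤ ‖z‖ ^ (j + 1) + 1 := by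
    have := norm_add_le (z ^ (j + 1)) 1
    rwa [hq, norm_mul, norm_pow, norm_pow, norm_one, Complex.norm_ofNat] at this
  rcases hr1.eq_or_lt with h1 | h1
  · have hz1 : z = 1 := by
      simpa [← h1] using Complex.eq_norm_of_pow_succ_add_one_eq hq (by rw [← h1]; norm_num)
    subst hz1
    have : j = 1 := by exact_mod_cast (by simpa using hz.symm : (j : ℂ) = 1)
    omega
  · have hr_ge : 0 ≤ ‖z‖ ^ j - ∑ k ∈ range j, ‖z‖ ^ k :=
      nonneg_of_mul_nonneg_right (by rw [sub_one_mul_pow_sub_geom_sum]; linarith) (by linarith)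
    have hr_root : ‖z‖ ^ j = ∑ k ∈ range j, ‖z‖ ^ k := by linarith
    have hrφ := eq_of_pow_eq_geom_sum (by omega) (by linarith) hφpos hr_root hφ
    refine hzφ ?_
    rw [Complex.eq_norm_of_pow_succ_add_one_eq hq
      (pow_succ_add_one_eq_of_pow_eq_geom_sum hr_root), hrφ]
end

section
/- Let j ≥ 2 and let b, a_0, ..., a_{j−1} be nonzero complex numbers with a_n = b · ∏_{k=1}^{j} a_{n−k} for n ≥ j. If |b| · ∏_{k=0}^{j−1} |a_k|^{1 − φ_j^{−k−1}} > 1, where φ_j is the j-nacci constant, then |a_n| → ∞. -/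
/-!
Taking logarithms, `Lₙ = log ‖aₙ‖` satisfies `L_{n+j} = log ‖b‖ + ∑_{k<j} L_{n+k}`, so
`uₙ = Lₙ + log ‖b‖ / (j - 1)` is a `j`-nacci sequence. The weights `w_k = 1 - φ^{-(k+1)}` are a left
eigenvector, for the eigenvalue `φ`, of the companion matrix, so the window sums
`Wₙ = ∑_{k<j} w_k u_{n+k}` satisfy `Wₙ = φⁿ W₀`, and the hypothesis says exactly `W₀ > 0`.
Subtracting from `u` the multiple `A φⁿ` with the same `W₀` leaves a sequence `D` with all window
sums zero, i.e. `w_{j-1} D_{n+j-1} = -∑_{k<j-1} w_k D_{n+k}` with `w_k ≥ 0`. Since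
`∑_{k<j-1} w_k φ^k < w_{j-1} φ^{j-1}`, the same inequality holds for some `ρ < φ`, whence
`Dₙ = O(ρⁿ)` and `uₙ = A φⁿ + O(ρⁿ) → ∞`.
-/

open Finset Filter Topology

def IsNacci (j : ℕ) (u : ℕ → ℝ) : Prop :=
  ∀ n, u (n + j) = ∑ k ∈ range j, u (n + k)

namespace IsNacci

variable {m : ℕ} {u v : ℕ → ℝ}

lemma sub (hu : IsNacci m u) (hv : IsNacci m v) : IsNacci m (u - v) := by
  intro n
  simp only [Pi.sub_apply, hu n, hv n, sum_sub_distrib]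

lemma const_mul (hu : IsNacci m u) (c : ℝ) : IsNacci m (fun n => c * u n) := by
  intro n
  simp only [hu n, mul_sum]

lemma weighted_sum_succ (hu : IsNacci (m + 1) u) {w : ℕ → ℝ} {φ : ℝ}
    (h0 : φ * w 0 = w m) (hstep : ∀ k < m, φ * w (k + 1) = w k + w m) (n : ℕ) :
    ∑ k ∈ range (m + 1), w k * u (n + 1 + k) = φ * ∑ k ∈ range (m + 1), w k * u (n + k) := by
  calc ∑ k ∈ range (m + 1), w k * u (n + 1 + k)
      = ∑ k ∈ range m, w k * u (n + (k + 1)) + w m * ∑ k ∈ range (m + 1), u (n + k) := by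
        rw [sum_range_succ, ← hu n]
        simp only [add_assoc, add_comm 1]
    _ = ∑ k ∈ range m, (w k + w m) * u (n + (k + 1)) + w m * u (n + 0) := by
        rw [mul_sum, sum_range_succ' (fun k => w m * u (n + k))]
        simp only [add_mul, sum_add_distrib]
        ring
    _ = φ * ∑ k ∈ range (m + 1), w k * u (n + k) := by
        rw [mul_sum, sum_range_succ' (fun k => φ * (w k * u (n + k)))]
        congr 1
        · refine sum_congr rfl fun k hk => ?_
          rw [← mul_assoc, hstep k (mem_range.1 hk)]
        · rw [← mul_assoc, h0]

lemma weighted_sum_eq_pow_mul (hu : IsNacci (m + 1) u) {w : ℕ → ℝ} {φ : ℝ}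
    (h0 : φ * w 0 = w m) (hstep : ∀ k < m, φ * w (k + 1) = w k + w m) (n : ℕ) :
    ∑ k ∈ range (m + 1), w k * u (n + k) = φ ^ n * ∑ k ∈ range (m + 1), w k * u k := by
  induction n with
  | zero => simp
  | succ n ih => rw [hu.weighted_sum_succ h0 hstep, ih, pow_succ]; ring

end IsNacci

lemma exists_abs_le_mul_pow_of_weighted_sum_eq_zero {m : ℕ} {c D : ℕ → ℝ} {ρ : ℝ}
    (hc : ∀ k, 0 ≤ c k) (hcm : 0 < c m) (hρ : 0 < ρ)
    (hcρ : ∑ k ∈ range m, c k * ρ ^ k ≤ c m * ρ ^ m)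
    (hD : ∀ n, ∑ k ∈ range (m + 1), c k * D (n + k) = 0) :
    ∃ K, ∀ n, |D n| ≤ K * ρ ^ n := by
  set K := ∑ i ∈ range m, |D i| / ρ ^ i
  have hK : 0 ≤ K := sum_nonneg fun i _ => by positivity
  refine ⟨K, fun n => ?_⟩
  induction n using Nat.strong_induction_on with
  | _ n ih =>
  rcases lt_or_ge n m with hn | hn
  · rw [← div_le_iff₀ (pow_pos hρ n)]
    exact single_le_sum (f := fun i => |D i| / ρ ^ i) (fun i _ => by positivity) (mem_range.2 hn)
  obtain ⟨t, rfl⟩ := Nat.exists_eq_add_of_le' hn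
  refine le_of_mul_le_mul_left ?_ hcm
  calc c m * |D (t + m)| = |∑ k ∈ range m, c k * D (t + k)| := by
        have h := hD t
        rw [sum_range_succ, add_eq_zero_iff_neg_eq] at h
        rw [← abs_of_pos hcm, ← abs_mul, ← h, abs_neg]
    _ ≤ ∑ k ∈ range m, c k * |D (t + k)| := by
        refine (abs_sum_le_sum_abs _ _).trans_eq (sum_congr rfl fun k _ => ?_)
        rw [abs_mul, abs_of_nonneg (hc k)]
    _ ≤ ∑ k ∈ range m, c k * (K * ρ ^ (t + k)) := by
        refine sum_le_sum fun k hk => mul_le_mul_of_nonneg_left (ih _ ?_) (hc k)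
        have := mem_range.1 hk
        omega
    _ = K * ρ ^ t * ∑ k ∈ range m, c k * ρ ^ k := by
        rw [mul_sum]
        refine sum_congr rfl fun k _ => ?_
        rw [pow_add]
        ring
    _ ≤ K * ρ ^ t * (c m * ρ ^ m) := by gcongr
    _ = c m * (K * ρ ^ (t + m)) := by ring

lemma exists_lt_sum_mul_pow_le {m : ℕ} {c : ℕ → ℝ} {φ : ℝ} (hφ : 0 < φ)
    (h : ∑ k ∈ range m, c k * φ ^ k < c m * φ ^ m) :
    ∃ ρ, 0 < ρ ∧ ρ < φ ∧ ∑ k ∈ range m, c k * ρ ^ k ≤ c m * ρ ^ m := by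
  have hcont : Continuous fun r : ℝ => c m * r ^ m - ∑ k ∈ range m, c k * r ^ k := by fun_prop
  have hnear : ∀ᶠ r in 𝓝 φ, 0 < r ∧ 0 < c m * r ^ m - ∑ k ∈ range m, c k * r ^ k :=
    (eventually_gt_nhds hφ).and (hcont.continuousAt.eventually (eventually_gt_nhds (by linarith)))
  obtain ⟨ρ, ⟨hρ, hgap⟩, hρφ⟩ :=
    ((hnear.filter_mono nhdsWithin_le_nhds).and (self_mem_nhdsWithin (s := Set.Iio φ))).exists
  exact ⟨ρ, hρ, hρφ, by linarith⟩

lemma tendsto_atTop_of_mul_pow_sub_le {φ ρ A K : ℝ} {f : ℕ → ℝ} (hφ : 1 < φ) (hρ : 0 ≤ ρ)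
    (hρφ : ρ < φ) (hA : 0 < A) (hf : ∀ n, A * φ ^ n - K * ρ ^ n ≤ f n) :
    Tendsto f atTop atTop := by
  have hφ0 : 0 < φ := by linarith
  have hratio : Tendsto (fun n => A - K * (ρ / φ) ^ n) atTop (𝓝 A) := by
    simpa using (tendsto_pow_atTop_nhds_zero_of_lt_one (by positivity)
      ((div_lt_one hφ0).2 hρφ)).const_mul K |>.const_sub A
  refine tendsto_atTop_mono hf ?_
  have hform : (fun n => A * φ ^ n - K * ρ ^ n) = fun n => φ ^ n * (A - K * (ρ / φ) ^ n) := by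
    ext n
    rw [div_pow]
    field_simp
  rw [hform]
  exact (tendsto_pow_atTop_atTop_of_one_lt hφ).atTop_mul_pos hA hratio

section NacciConstant

variable {m : ℕ} {φ : ℝ}

lemma eq_one_add_sum_inv_pow (hφ0 : 0 < φ) (hφ : ∑ k ∈ range (m + 1), φ⁻¹ ^ (k + 1) = 1) :
    φ = 1 + ∑ k ∈ range m, φ⁻¹ ^ (k + 1) := by
  have h : ∑ k ∈ range (m + 1), φ⁻¹ ^ k = φ :=
    calc ∑ k ∈ range (m + 1), φ⁻¹ ^ k = φ * ∑ k ∈ range (m + 1), φ⁻¹ ^ (k + 1) := by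
          rw [mul_sum]
          refine sum_congr rfl fun k _ => ?_
          rw [pow_succ', ← mul_assoc, mul_inv_cancel₀ hφ0.ne', one_mul]
      _ = φ := by rw [hφ, mul_one]
  rw [sum_range_succ', pow_zero] at h
  linarith

lemma one_sub_inv_pow_eq (hφ0 : 0 < φ) (hφ : ∑ k ∈ range (m + 1), φ⁻¹ ^ (k + 1) = 1) :
    1 - φ⁻¹ ^ (m + 1) = φ - 1 := by
  have h := eq_one_add_sum_inv_pow hφ0 hφ
  rw [sum_range_succ] at hφ
  linarith

lemma one_lt_of_sum_inv_pow_eq_one (hm : 1 ≤ m) (hφ0 : 0 < φ)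
    (hφ : ∑ k ∈ range (m + 1), φ⁻¹ ^ (k + 1) = 1) : 1 < φ := by
  rw [eq_one_add_sum_inv_pow hφ0 hφ, lt_add_iff_pos_right]
  exact sum_pos (fun k _ => by positivity) (nonempty_range_iff.2 (by omega))

lemma isNacci_pow (hφ0 : 0 < φ) (hφ : ∑ k ∈ range (m + 1), φ⁻¹ ^ (k + 1) = 1) :
    IsNacci (m + 1) (φ ^ ·) := by
  have hchar : ∑ k ∈ range (m + 1), φ ^ k = φ ^ (m + 1) := by
    calc ∑ k ∈ range (m + 1), φ ^ k = ∑ k ∈ range (m + 1), φ ^ (m - k) :=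
          (sum_range_reflect (φ ^ ·) (m + 1)).symm
      _ = ∑ k ∈ range (m + 1), φ ^ (m + 1) * φ⁻¹ ^ (k + 1) := by
          refine sum_congr rfl fun k hk => ?_
          rw [inv_pow, ← pow_sub₀ φ hφ0.ne' (by have := mem_range.1 hk; omega)]
          congr 1
          have := mem_range.1 hk
          omega
      _ = φ ^ (m + 1) := by rw [← mul_sum, hφ, mul_one]
  intro n
  simp only [pow_add, ← mul_sum, hchar]

noncomputable def nacciWeight (φ : ℝ) (k : ℕ) : ℝ := 1 - φ⁻¹ ^ (k + 1)

lemma nacciWeight_nonneg (hφ : 1 ≤ φ) (k : ℕ) : 0 ≤ nacciWeight φ k :=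
  sub_nonneg.2 (pow_le_one₀ (by positivity) (inv_le_one_of_one_le₀ hφ))

lemma nacciWeight_last (hφ0 : 0 < φ) (hφ : ∑ k ∈ range (m + 1), φ⁻¹ ^ (k + 1) = 1) :
    nacciWeight φ m = φ - 1 :=
  one_sub_inv_pow_eq hφ0 hφ

lemma mul_nacciWeight_zero (hφ0 : 0 < φ) (hφ : ∑ k ∈ range (m + 1), φ⁻¹ ^ (k + 1) = 1) :
    φ * nacciWeight φ 0 = nacciWeight φ m := by
  rw [nacciWeight_last hφ0 hφ, nacciWeight, zero_add, pow_one, mul_sub, mul_inv_cancel₀ hφ0.ne',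
    mul_one]

lemma mul_nacciWeight_succ (hφ0 : 0 < φ) (hφ : ∑ k ∈ range (m + 1), φ⁻¹ ^ (k + 1) = 1) (k : ℕ) :
    φ * nacciWeight φ (k + 1) = nacciWeight φ k + nacciWeight φ m := by
  rw [nacciWeight_last hφ0 hφ, nacciWeight, nacciWeight, pow_succ' _ (k + 1), mul_sub,
    ← mul_assoc, mul_inv_cancel₀ hφ0.ne']
  ring

lemma sum_nacciWeight (hφ : ∑ k ∈ range (m + 1), φ⁻¹ ^ (k + 1) = 1) :
    ∑ k ∈ range (m + 1), nacciWeight φ k = m := by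
  simp only [nacciWeight, sum_sub_distrib, hφ, sum_const, card_range, nsmul_eq_mul]
  push_cast
  ring

lemma sum_nacciWeight_mul_pow_lt (hm : 1 ≤ m) (hφ0 : 0 < φ)
    (hφ : ∑ k ∈ range (m + 1), φ⁻¹ ^ (k + 1) = 1) :
    ∑ k ∈ range m, nacciWeight φ k * φ ^ k < nacciWeight φ m * φ ^ m := by
  have hterm : ∀ k, nacciWeight φ k * φ ^ k = φ ^ k - φ⁻¹ := fun k => by
    rw [nacciWeight, sub_mul, one_mul, pow_succ', mul_assoc, ← mul_pow, inv_mul_cancel₀ hφ0.ne',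
      one_pow, mul_one]
  have hchar := isNacci_pow hφ0 hφ 0
  simp only [zero_add, sum_range_succ] at hchar
  simp only [hterm, sum_sub_distrib, sum_const, card_range, nsmul_eq_mul,
    nacciWeight_last hφ0 hφ, pow_succ] at hchar ⊢
  have : 0 < (m : ℝ) * φ⁻¹ := by positivity
  nlinarith

end NacciConstant

theorem IsNacci.tendsto_atTop {m : ℕ} {φ : ℝ} {u : ℕ → ℝ} (hu : IsNacci (m + 1) u) (hm : 1 ≤ m)
    (hφ0 : 0 < φ) (hφ : ∑ k ∈ range (m + 1), φ⁻¹ ^ (k + 1) = 1)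
    (hpos : 0 < ∑ k ∈ range (m + 1), nacciWeight φ k * u k) : Tendsto u atTop atTop := by
  have hφ1 := one_lt_of_sum_inv_pow_eq_one hm hφ0 hφ
  have hw := nacciWeight_nonneg hφ1.le
  have hwm : 0 < nacciWeight φ m := by rw [nacciWeight_last hφ0 hφ]; linarith
  have hT : 0 < ∑ k ∈ range (m + 1), nacciWeight φ k * φ ^ k := by
    rw [sum_range_succ]
    have := sum_nonneg fun k (_ : k ∈ range m) => mul_nonneg (hw k) (pow_nonneg hφ0.le k)
    positivity
  set W := ∑ k ∈ range (m + 1), nacciWeight φ k * u k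
  set T := ∑ k ∈ range (m + 1), nacciWeight φ k * φ ^ k
  set A := W / T
  set D := u - fun n => A * φ ^ n
  have hD : ∀ n, ∑ k ∈ range (m + 1), nacciWeight φ k * D (n + k) = 0 := by
    intro n
    rw [(hu.sub ((isNacci_pow hφ0 hφ).const_mul A)).weighted_sum_eq_pow_mul
      (mul_nacciWeight_zero hφ0 hφ) fun k _ => mul_nacciWeight_succ hφ0 hφ k]
    simp only [Pi.sub_apply, mul_sub, sum_sub_distrib, mul_left_comm _ A, ← mul_sum]
    change φ ^ n * W - A * (φ ^ n * T) = 0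
    rw [mul_left_comm, div_mul_cancel₀ W hT.ne', sub_self]
  obtain ⟨ρ, hρ, hρφ, hρroot⟩ :=
    exists_lt_sum_mul_pow_le hφ0 (sum_nacciWeight_mul_pow_lt hm hφ0 hφ)
  obtain ⟨K, hK⟩ := exists_abs_le_mul_pow_of_weighted_sum_eq_zero hw hwm hρ hρroot hD
  refine tendsto_atTop_of_mul_pow_sub_le (K := K) hφ1 hρ.le hρφ (div_pos hpos hT) fun n => ?_
  have := (abs_le.1 (hK n)).1
  simp only [D, Pi.sub_apply] at this
  linarith

lemma sum_Icc_zpow_neg_eq_sum_range (φ : ℝ) (j : ℕ) :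
    ∑ k ∈ Icc 1 j, φ ^ (-(k : ℤ)) = ∑ k ∈ range j, φ⁻¹ ^ (k + 1) := by
  rw [← Ico_add_one_right_eq_Icc, range_eq_Ico, ← zero_add 1, ← sum_Ico_add', zero_add]
  refine sum_congr rfl fun k _ => ?_
  rw [← zpow_natCast, inv_zpow', Nat.cast_add, Nat.cast_one, neg_add, add_comm]

lemma prod_Icc_sub_eq_prod_range {M : Type*} [CommMonoid M] (f : ℕ → M) (n j : ℕ) :
    ∏ k ∈ Icc 1 j, f (n + j - k) = ∏ k ∈ range j, f (n + k) := by
  rw [← Ico_add_one_right_eq_Icc, prod_Ico_reflect f 1 (by omega : j + 1 ≤ n + j + 1),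
    prod_Ico_eq_prod_range]
  simp only [Nat.add_sub_cancel, Nat.add_sub_add_right, Nat.add_sub_cancel_left]

lemma ne_zero_of_eq_mul_prod {M : Type*} [CommMonoidWithZero M] [NoZeroDivisors M] [Nontrivial M]
    {j : ℕ} {b : M} {a : ℕ → M} (hb : b ≠ 0) (ha : ∀ k < j, a k ≠ 0)
    (hrec : ∀ n ≥ j, a n = b * ∏ k ∈ Icc 1 j, a (n - k)) (n : ℕ) : a n ≠ 0 := by
  induction n using Nat.strong_induction_on with
  | _ n ih =>
  rcases lt_or_ge n j with hn | hn
  · exact ha n hn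
  rw [hrec n hn]
  refine mul_ne_zero hb (prod_ne_zero_iff.2 fun k hk => ih _ ?_)
  have := mem_Icc.1 hk
  omega

lemma isNacci_log_norm_add_div {𝕜 : Type*} [NormedField 𝕜] {m : ℕ} (hm : m ≠ 0) {b : 𝕜}
    {a : ℕ → 𝕜} (hb : b ≠ 0) (ha : ∀ n, a n ≠ 0)
    (hrec : ∀ n ≥ m + 1, a n = b * ∏ k ∈ Icc 1 (m + 1), a (n - k)) :
    IsNacci (m + 1) (fun n => Real.log ‖a n‖ + Real.log ‖b‖ / m) := by
  intro n
  dsimp only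
  have h := hrec (n + (m + 1)) (by omega)
  rw [prod_Icc_sub_eq_prod_range a] at h
  have hnorm : ∀ k, ‖a k‖ ≠ 0 := fun k => norm_ne_zero_iff.2 (ha k)
  rw [h, norm_mul, norm_prod, Real.log_mul (norm_ne_zero_iff.2 hb)
    (prod_ne_zero_iff.2 fun k _ => hnorm _), Real.log_prod fun k _ => hnorm _, sum_add_distrib,
    sum_const, card_range, nsmul_eq_mul]
  field_simp
  push_cast
  ring

theorem stmt_17 (j : ℕ) (hj : 2 ≤ j) (b : ℂ) (hb : b ≠ 0)
    (a : ℕ → ℂ) (ha : ∀ k < j, a k ≠ 0)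
    (hrec : ∀ n ≥ j, a n = b * ∏ k ∈ Finset.Icc 1 j, a (n - k))
    (φ : ℝ) (hφpos : 0 < φ)
    (hφ : ∑ k ∈ Finset.Icc 1 j, φ ^ (-(k : ℤ)) = 1)
    (hcond : 1 < ‖b‖ *
      ∏ k ∈ Finset.range j, ‖a k‖ ^ ((1 : ℝ) - φ⁻¹ ^ (k + 1))) :
    Filter.Tendsto (fun n => ‖a n‖) Filter.atTop Filter.atTop := by
  obtain ⟨m, rfl⟩ : ∃ m, j = m + 1 := ⟨j - 1, by omega⟩
  rw [sum_Icc_zpow_neg_eq_sum_range] at hφ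
  have ha0 := ne_zero_of_eq_mul_prod hb ha hrec
  have hnorm : ∀ n, 0 < ‖a n‖ := fun n => norm_pos_iff.2 (ha0 n)
  have hW : 0 < ∑ k ∈ range (m + 1), nacciWeight φ k * (Real.log ‖a k‖ + Real.log ‖b‖ / m) := by
    have h := Real.log_pos hcond
    have hpow : ∀ k, 0 < ‖a k‖ ^ ((1 : ℝ) - φ⁻¹ ^ (k + 1)) := fun k => by
      have := hnorm k
      positivity
    rw [Real.log_mul (by simpa) (prod_pos fun k _ => hpow k).ne',
      Real.log_prod fun k _ => (hpow k).ne'] at h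
    simp only [Real.log_rpow (hnorm _)] at h
    simp only [mul_add, sum_add_distrib, ← sum_mul, sum_nacciWeight hφ]
    rw [mul_div_cancel₀ _ (by norm_cast; omega)]
    simpa only [nacciWeight, add_comm] using h
  have hlog :=
    (isNacci_log_norm_add_div (by omega) hb ha0 hrec).tendsto_atTop (by omega) hφpos hφ hW
  have := tendsto_atTop_add_const_right _ (-(Real.log ‖b‖ / m)) hlog
  simp only [add_neg_cancel_right] at this
  exact (Real.tendsto_exp_atTop.comp this).congr fun n => Real.exp_log (hnorm n)
end

section
/- Let S be a finite set of positive integers with |S| ≥ 2 and max(S) = j, and suppose gcd of all elements of S is 1 (i.e., S ⊄ mℤ for any m ≥ 2). Then F^{(S)}_n / φ_S^n converges to a positive real limit as n → ∞, where φ_S > 1 is the unique positive real number with ∑_{ℓ∈S} φ_S^{−ℓ} = 1. -/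
/-!
Dividing by `φ ^ n` turns the recurrence into `G m = ∑ ℓ ∈ S, w ℓ * G (m - ℓ)` with positive
weights `w ℓ = φ ^ (-ℓ)` summing to `1`: every value is an average of earlier ones. Hence the
maximum of `G` over a window of length `j + 1` never increases along the sequence and the minimum
never decreases. Since `gcd S = 1`, every large integer is a sum of elements of `S`, so the value
where a window attains its minimum enters, with a weight bounded below, every entry of a window a
fixed distance later. This shrinks the oscillation by a fixed factor, which forces the maximum and
the minimum to a common limit. The same sums propagate `F (j - 1) = 1` to a uniform positive lower
bound on `G`, so the limit is positive.
-/

open Filter Topology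

theorem Nat.exists_forall_ge_mem_closure_of_gcd_eq_one {S : Finset ℕ} (hS : S.gcd id = 1) :
    ∃ N, ∀ m ≥ N, m ∈ AddSubmonoid.closure (S : Set ℕ) := by
  obtain ⟨N, hN⟩ := exists_mem_closure_of_ge (S : Set ℕ)
  have hgcd : setGcd (S : Set ℕ) = 1 :=
    Nat.dvd_one.mp (hS ▸ Finset.dvd_gcd fun _ hℓ => setGcd_dvd_of_mem hℓ)
  exact ⟨N, fun m hm => hN m hm (hgcd ▸ one_dvd m)⟩

structure IsRenewalEquation (S : Finset ℕ) (j : ℕ) (w G : ℕ → ℝ) : Prop where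
  isGreatest : IsGreatest (S : Set ℕ) j
  pos : ∀ ℓ ∈ S, 0 < ℓ
  weight_pos : ∀ ℓ ∈ S, 0 < w ℓ
  sum_weight : ∑ ℓ ∈ S, w ℓ = 1
  eq : ∀ m ≥ j, G m = ∑ ℓ ∈ S, w ℓ * G (m - ℓ)

def windowSup (G : ℕ → ℝ) (j n : ℕ) : ℝ :=
  (Finset.range (j + 1)).sup' Finset.nonempty_range_add_one fun i => G (n + i)

def windowInf (G : ℕ → ℝ) (j n : ℕ) : ℝ :=
  (Finset.range (j + 1)).inf' Finset.nonempty_range_add_one fun i => G (n + i)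

namespace IsRenewalEquation

variable {S : Finset ℕ} {j : ℕ} {w G : ℕ → ℝ}

theorem neg (h : IsRenewalEquation S j w G) : IsRenewalEquation S j w (-G) where
  __ := h
  eq m hm := by simp [h.eq m hm, Finset.sum_neg_distrib]

theorem le_of_forall_le_window (h : IsRenewalEquation S j w G) {n m : ℕ} {B : ℝ}
    (hB : ∀ i ≤ j, G (n + i) ≤ B) (hm : n ≤ m) : G m ≤ B := by
  induction m using Nat.strong_induction_on with
  | _ m ih =>
    by_cases hmj : m ≤ n + j
    · simpa [Nat.add_sub_cancel' hm] using hB (m - n) (by omega)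
    rw [h.eq m (by omega), ← one_mul B, ← h.sum_weight, Finset.sum_mul]
    refine Finset.sum_le_sum fun ℓ hℓ => mul_le_mul_of_nonneg_left ?_ (h.weight_pos ℓ hℓ).le
    have := h.pos ℓ hℓ
    have := h.isGreatest.2 hℓ
    exact ih (m - ℓ) (by omega) (by omega)

theorem le_windowSup (h : IsRenewalEquation S j w G) {n m : ℕ} (hm : n ≤ m) :
    G m ≤ windowSup G j n :=
  h.le_of_forall_le_window
    (fun _ hi => Finset.le_sup' (fun i => G (n + i)) (Finset.mem_range_succ_iff.mpr hi)) hm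

theorem windowInf_le (h : IsRenewalEquation S j w G) {n m : ℕ} (hm : n ≤ m) :
    windowInf G j n ≤ G m :=
  neg_le_neg_iff.mp <| h.neg.le_of_forall_le_window
    (fun _ hi => neg_le_neg (Finset.inf'_le _ (Finset.mem_range_succ_iff.mpr hi))) hm

theorem windowInf_le_windowSup (h : IsRenewalEquation S j w G) (n : ℕ) :
    windowInf G j n ≤ windowSup G j n :=
  (h.windowInf_le le_rfl).trans (h.le_windowSup le_rfl)

theorem antitone_windowSup (h : IsRenewalEquation S j w G) : Antitone (windowSup G j) :=
  antitone_nat_of_succ_le fun _ => Finset.sup'_le _ _ fun _ _ => h.le_windowSup (by omega)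

theorem monotone_windowInf (h : IsRenewalEquation S j w G) : Monotone (windowInf G j) :=
  monotone_nat_of_le_succ fun _ => Finset.le_inf' _ _ fun _ _ => h.windowInf_le (by omega)

theorem le_sub_mul_of_le_sub (h : IsRenewalEquation S j w G) {n m ℓ : ℕ} {B e : ℝ}
    (hB : ∀ k ≥ n, G k ≤ B) (hm : n + j ≤ m) (hℓ : ℓ ∈ S) (he : G (m - ℓ) ≤ B - e) :
    G m ≤ B - w ℓ * e := by
  have hrest : ∑ ℓ' ∈ S.erase ℓ, w ℓ' * G (m - ℓ') ≤ (1 - w ℓ) * B := by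
    rw [← h.sum_weight, ← Finset.sum_erase_add _ _ hℓ, add_sub_cancel_right, Finset.sum_mul]
    refine Finset.sum_le_sum fun ℓ' hℓ' => ?_
    have hℓ'S := Finset.mem_of_mem_erase hℓ'
    have := h.isGreatest.2 hℓ'S
    exact mul_le_mul_of_nonneg_left (hB _ (by omega)) (h.weight_pos ℓ' hℓ'S).le
  have hℓterm := mul_le_mul_of_nonneg_left he (h.weight_pos ℓ hℓ).le
  rw [h.eq m (by omega), ← Finset.add_sum_erase _ _ hℓ]
  linarith

theorem le_sub_pow_mul_of_mem_closure (h : IsRenewalEquation S j w G) {n k d : ℕ} {B c : ℝ}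
    (hB : ∀ m ≥ n, G m ≤ B) (hk : n ≤ k) (hc0 : 0 ≤ c) (hc1 : c ≤ 1) (hc : ∀ ℓ ∈ S, c ≤ w ℓ)
    (hd : d ∈ AddSubmonoid.closure (S : Set ℕ)) :
    G (k + j + d) ≤ B - c ^ (j + d) * (B - G k) := by
  have hgap : 0 ≤ B - G k := sub_nonneg.mpr (hB k hk)
  induction hd using AddSubmonoid.closure_induction_left with
  | zero =>
    have hjS := h.isGreatest.1
    have hstep := h.le_sub_mul_of_le_sub hB (m := k + j) (by omega) hjS (e := B - G k)
      (by simp)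
    have hcj : c ^ j ≤ w j :=
      (pow_le_of_le_one hc0 hc1 (h.pos j hjS).ne').trans (hc j hjS)
    simpa using hstep.trans (sub_le_sub_left (mul_le_mul_of_nonneg_right hcj hgap) B)
  | add_left x hx y _ ih =>
    have hstep := h.le_sub_mul_of_le_sub hB (m := k + j + (x + y)) (by omega) hx
      (e := c ^ (j + y) * (B - G k)) (by rwa [show k + j + (x + y) - x = k + j + y by omega])
    have hcx : c ^ (j + (x + y)) ≤ w x * c ^ (j + y) := by
      rw [show j + (x + y) = x + (j + y) by omega, pow_add]
      exact mul_le_mul_of_nonneg_right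
        ((pow_le_of_le_one hc0 hc1 (h.pos x hx).ne').trans (hc x hx)) (pow_nonneg hc0 _)
    calc G (k + j + (x + y)) ≤ B - w x * (c ^ (j + y) * (B - G k)) := hstep
      _ ≤ B - c ^ (j + (x + y)) * (B - G k) := by
        rw [← mul_assoc]
        exact sub_le_sub_left (mul_le_mul_of_nonneg_right hcx hgap) B

theorem exists_windowSup_add_le (h : IsRenewalEquation S j w G) (hgcd : S.gcd id = 1) :
    ∃ T : ℕ, ∃ δ > 0, ∀ n,
      windowSup G j (n + T) ≤ windowSup G j n - δ * (windowSup G j n - windowInf G j n) := by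
  obtain ⟨N, hN⟩ := Nat.exists_forall_ge_mem_closure_of_gcd_eq_one hgcd
  have hjS := h.isGreatest.1
  set c := S.inf' ⟨j, hjS⟩ w
  have hc : ∀ ℓ ∈ S, c ≤ w ℓ := fun ℓ hℓ => Finset.inf'_le w hℓ
  have hc0 : 0 < c := (Finset.lt_inf'_iff _).mpr h.weight_pos
  have hc1 : c ≤ 1 := (hc j hjS).trans <| h.sum_weight ▸
    Finset.single_le_sum (fun ℓ hℓ => (h.weight_pos ℓ hℓ).le) hjS
  refine ⟨N + 2 * j, c ^ (N + 3 * j), pow_pos hc0 _, fun n => Finset.sup'_le _ _ fun r hr => ?_⟩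
  obtain ⟨i₀, hi₀, hmin : windowInf G j n = G (n + i₀)⟩ :=
    Finset.exists_mem_eq_inf' Finset.nonempty_range_add_one fun i => G (n + i)
  have hi₀j := Finset.mem_range_succ_iff.mp hi₀
  have hrj := Finset.mem_range_succ_iff.mp hr
  have hchain := h.le_sub_pow_mul_of_mem_closure (fun m hm => h.le_windowSup hm)
    (n := n) (k := n + i₀) (by omega) hc0.le hc1 hc (hN (N + j + r - i₀) (by omega))
  rw [show n + i₀ + j + (N + j + r - i₀) = n + (N + 2 * j) + r by omega, ← hmin] at hchain
  have hδ : c ^ (N + 3 * j) ≤ c ^ (j + (N + j + r - i₀)) :=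
    pow_le_pow_of_le_one hc0.le hc1 (by omega)
  have hgap := sub_nonneg.mpr (h.windowInf_le_windowSup n)
  exact hchain.trans (sub_le_sub_left (mul_le_mul_of_nonneg_right hδ hgap) _)

theorem exists_tendsto (h : IsRenewalEquation S j w G) (hgcd : S.gcd id = 1) :
    ∃ c, Tendsto G atTop (𝓝 c) := by
  obtain ⟨T, δ, hδ, hT⟩ := h.exists_windowSup_add_le hgcd
  obtain ⟨a, ha⟩ : ∃ a, Tendsto (windowSup G j) atTop (𝓝 a) :=
    ⟨_, tendsto_atTop_ciInf h.antitone_windowSup ⟨windowInf G j 0, by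
      rintro _ ⟨n, rfl⟩
      exact (h.monotone_windowInf n.zero_le).trans (h.windowInf_le_windowSup n)⟩⟩
  obtain ⟨b, hb⟩ : ∃ b, Tendsto (windowInf G j) atTop (𝓝 b) :=
    ⟨_, tendsto_atTop_ciSup h.monotone_windowInf ⟨windowSup G j 0, by
      rintro _ ⟨n, rfl⟩
      exact (h.windowInf_le_windowSup n).trans (h.antitone_windowSup n.zero_le)⟩⟩
  have hba : b ≤ a := le_of_tendsto_of_tendsto' hb ha h.windowInf_le_windowSup
  have hcontr : a ≤ a - δ * (a - b) :=
    le_of_tendsto_of_tendsto' (ha.comp (tendsto_add_atTop_nat T))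
      (ha.sub ((ha.sub hb).const_mul δ)) hT
  have hab : a = b := le_antisymm (by nlinarith) hba
  exact ⟨a, tendsto_of_tendsto_of_tendsto_of_le_of_le (hab ▸ hb) ha
    (fun _ => h.windowInf_le le_rfl) (fun _ => h.le_windowSup le_rfl)⟩

theorem pos_of_mem_closure (h : IsRenewalEquation S j w G) (hG : ∀ m, 0 ≤ G m) {k d : ℕ}
    (hk : 0 < G k) (hkj : j ≤ k + 1) (hd : d ∈ AddSubmonoid.closure (S : Set ℕ)) :
    0 < G (k + d) := by
  induction hd using AddSubmonoid.closure_induction_left with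
  | zero => simpa using hk
  | add_left x hx y _ ih =>
    have hx1 := h.pos x hx
    rw [h.eq _ (by omega)]
    calc 0 < w x * G (k + (x + y) - x) :=
          mul_pos (h.weight_pos x hx) (by rwa [show k + (x + y) - x = k + y by omega])
      _ ≤ ∑ ℓ ∈ S, w ℓ * G (k + (x + y) - ℓ) :=
          Finset.single_le_sum (fun ℓ hℓ => mul_nonneg (h.weight_pos ℓ hℓ).le (hG _)) hx

theorem exists_pos_eventually_le (h : IsRenewalEquation S j w G) (hgcd : S.gcd id = 1)
    (hG : ∀ m, 0 ≤ G m) {k : ℕ} (hk : 0 < G k) (hkj : j ≤ k + 1) :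
    ∃ ε > 0, ∀ᶠ m in atTop, ε ≤ G m := by
  obtain ⟨N, hN⟩ := Nat.exists_forall_ge_mem_closure_of_gcd_eq_one hgcd
  refine ⟨windowInf G j (k + N), (Finset.lt_inf'_iff _).mpr fun i _ => ?_,
    eventually_atTop.mpr ⟨k + N, fun _ hm => h.windowInf_le hm⟩⟩
  rw [add_assoc]
  exact h.pos_of_mem_closure hG hk hkj (hN _ (by omega))

end IsRenewalEquation

theorem isRenewalEquation_div_pow {S : Finset ℕ} {j : ℕ} {F : ℕ → ℝ} {φ : ℝ}
    (hj : IsGreatest (S : Set ℕ) j) (hpos : ∀ ℓ ∈ S, 0 < ℓ) (hφ0 : 0 < φ)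
    (hφ : ∑ ℓ ∈ S, (φ ^ ℓ)⁻¹ = 1) (hF : ∀ n ≥ j, F n = ∑ ℓ ∈ S, F (n - ℓ)) :
    IsRenewalEquation S j (fun ℓ => (φ ^ ℓ)⁻¹) (fun n => F n / φ ^ n) where
  isGreatest := hj
  pos := hpos
  weight_pos _ _ := by positivity
  sum_weight := hφ
  eq m hm := by
    rw [hF m hm, Finset.sum_div]
    refine Finset.sum_congr rfl fun ℓ hℓ => ?_
    rw [← Nat.sub_add_cancel ((hj.2 hℓ).trans hm), pow_add, Nat.add_sub_cancel]
    field_simp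

theorem stmt_19_general (S : Finset ℕ) (hS : S.Nonempty) (hpos : ∀ ℓ ∈ S, 0 < ℓ)
    (hgcd : S.gcd id = 1)
    (F : ℕ → ℕ)
    (hF1 : F (S.max' hS - 1) = 1)
    (hFrec : ∀ n ≥ S.max' hS, F n = ∑ ℓ ∈ S, F (n - ℓ))
    (φ : ℝ) (hφgt : 1 < φ)
    (hφ : ∑ ℓ ∈ S, φ ^ (-(ℓ : ℤ)) = 1) :
    ∃ c : ℝ, 0 < c ∧
      Filter.Tendsto (fun n => (F n : ℝ) / φ ^ n) Filter.atTop (nhds c) := by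
  have hφ0 : 0 < φ := zero_lt_one.trans hφgt
  have hR := isRenewalEquation_div_pow (F := fun n => (F n : ℝ)) (S.isGreatest_max' hS) hpos hφ0
    (by simpa [zpow_neg] using hφ) (fun n hn => by exact_mod_cast hFrec n hn)
  obtain ⟨c, hc⟩ := hR.exists_tendsto hgcd
  obtain ⟨ε, hε, hεG⟩ := hR.exists_pos_eventually_le hgcd (fun _ => by positivity)
    (k := S.max' hS - 1) (by simp [hF1, hφ0]) (by omega)
  exact ⟨c, hε.trans_le (ge_of_tendsto hc hεG), hc⟩

theorem stmt_19 (S : Finset ℕ) (hS : S.Nonempty) (hpos : ∀ ℓ ∈ S, 0 < ℓ)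
    (hcard : 2 ≤ S.card) (hgcd : S.gcd id = 1)
    (F : ℕ → ℕ)
    (hF0 : ∀ n < S.max' hS - 1, F n = 0)
    (hF1 : F (S.max' hS - 1) = 1)
    (hFrec : ∀ n ≥ S.max' hS, F n = ∑ ℓ ∈ S, F (n - ℓ))
    (φ : ℝ) (hφgt : 1 < φ)
    (hφ : ∑ ℓ ∈ S, φ ^ (-(ℓ : ℤ)) = 1) :
    ∃ c : ℝ, 0 < c ∧
      Filter.Tendsto (fun n => (F n : ℝ) / φ ^ n) Filter.atTop (nhds c) :=
  stmt_19_general S hS hpos hgcd F hF1 hFrec φ hφgt hφ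
end
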